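/- Let Q be a density matrix with rank(Q) = d'. Then for admissible r and s, HY_r^s(Q) ≤ (1/((1−r)s))·(d'^{(1−r)s} − 1), with equality iff the nonzero spectrum of Q is (1/d', …, 1/d'). -/

import Mathlib

open scoped ComplexOrder Matrix

/-- The Hu–Ye unified entropy of a Hermitian matrix, computed from its eigenvalues. -/
noncomputable def HY {d : ℕ} {Q : Matrix (Fin d) (Fin d) ℂ}
    (hQ : Q.IsHermitian) (r s : ℝ) : ℝ :=
  (1 / ((1 - r) * s)) * ((∑ i, hQ.eigenvalues i ^ r) ^ s - 1)

/-! The eigenvalues `λᵢ` of `Q` form a probability vector supported on `rank Q = d'` indices.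
On that support, Jensen's inequality with uniform weights `1 / d'` for `x ↦ (1 - r) x ^ r`, which is
strictly concave both for `r < 1` and for `r > 1`, gives `(1 - r) ∑ λᵢ ^ r ≤ (1 - r) d' ^ (1 - r)`,
with equality iff every nonzero `λᵢ` is `1 / d'`. Since `T ↦ (T ^ s - 1) / s` is strictly increasing
for `s ≠ 0`, multiplying by `(1 - r)⁻¹` turns this into the bound on `HY` whatever the sign of
`1 - r`. -/

open Finset Set

lemma StrictConcaveOn.const_mul {D : Set ℝ} {f : ℝ → ℝ} {c : ℝ} (hc : 0 < c)
    (hf : StrictConcaveOn ℝ D f) : StrictConcaveOn ℝ D fun x => c * f x := by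
  refine ⟨hf.1, fun x hx y hy hxy a b ha hb hab => ?_⟩
  have := mul_lt_mul_of_pos_left (hf.2 hx hy hxy ha hb hab) hc
  simp only [smul_eq_mul] at this ⊢
  linarith

lemma Real.strictConcaveOn_one_sub_mul_rpow {r : ℝ} (hr0 : 0 < r) (hr1 : r ≠ 1) :
    StrictConcaveOn ℝ (Ici 0) fun x : ℝ => (1 - r) * x ^ r := by
  rcases hr1.lt_or_gt with hlt | hgt
  · exact (Real.strictConcaveOn_rpow hr0 hlt).const_mul (sub_pos.2 hlt)
  · convert (strictConvexOn_rpow hgt).neg.const_mul (sub_pos.2 hgt) using 2 with x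
    simp only [Pi.neg_apply]
    ring

lemma Real.mul_inv_rpow_eq_rpow_one_sub {x : ℝ} (hx : 0 < x) (r : ℝ) :
    x * x⁻¹ ^ r = x ^ (1 - r) := by
  rw [Real.inv_rpow hx.le, Real.rpow_sub hx, Real.rpow_one, div_eq_mul_inv]

section UniformJensen

variable {ι : Type*} {D : Set ℝ} {f : ℝ → ℝ} {s : Finset ι} {p : ι → ℝ}

lemma card_pos_of_sum_eq_one (hp : ∑ i ∈ s, p i = 1) : (0 : ℝ) < #s := by
  have : s.Nonempty := Finset.nonempty_of_sum_ne_zero (by rw [hp]; exact one_ne_zero)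
  exact_mod_cast this.card_pos

lemma ConcaveOn.sum_le_card_mul_map_inv_card (hf : ConcaveOn ℝ D f) (hpD : ∀ i ∈ s, p i ∈ D)
    (hp : ∑ i ∈ s, p i = 1) : ∑ i ∈ s, f (p i) ≤ #s * f (#s : ℝ)⁻¹ := by
  have hn := card_pos_of_sum_eq_one hp
  have := hf.le_map_sum (w := fun _ => (#s : ℝ)⁻¹) (fun _ _ => by positivity)
    (by simp [hn.ne']) hpD
  simp only [smul_eq_mul, ← mul_sum, hp, mul_one] at this
  exact (inv_mul_le_iff₀ hn).1 this

lemma StrictConcaveOn.sum_eq_card_mul_map_inv_card_iff (hf : StrictConcaveOn ℝ D f)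
    (hpD : ∀ i ∈ s, p i ∈ D) (hp : ∑ i ∈ s, p i = 1) :
    ∑ i ∈ s, f (p i) = #s * f (#s : ℝ)⁻¹ ↔ ∀ i ∈ s, p i = (#s : ℝ)⁻¹ := by
  have hn := card_pos_of_sum_eq_one hp
  have := hf.map_sum_eq_iff (w := fun _ => (#s : ℝ)⁻¹) (fun _ _ => by positivity)
    (by simp [hn.ne']) hpD
  simp only [smul_eq_mul, ← mul_sum, hp, mul_one] at this
  rw [← this, eq_comm, eq_inv_mul_iff_mul_eq₀ hn.ne', eq_comm]

end UniformJensen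

section PowerSum

variable {ι : Type*} [Fintype ι] {p : ι → ℝ} {r : ℝ}

lemma sum_rpow_eq_sum_filter_ne_zero (hr : r ≠ 0) :
    ∑ i, p i ^ r = ∑ i with p i ≠ 0, p i ^ r :=
  (sum_filter_of_ne fun i _ => by contrapose!; intro hi; rw [hi, Real.zero_rpow hr]).symm

lemma sum_rpow_pos (hp0 : 0 ≤ p) (hp1 : ∑ i, p i = 1) : 0 < ∑ i, p i ^ r := by
  obtain ⟨i, -, hi⟩ := exists_lt_of_sum_lt (s := univ) (f := 0) (g := p) (by simp [hp1])
  exact sum_pos' (fun j _ => Real.rpow_nonneg (hp0 j) r) ⟨i, mem_univ i, Real.rpow_pos_of_pos hi r⟩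

lemma one_sub_mul_sum_rpow_le (hp0 : 0 ≤ p) (hp1 : ∑ i, p i = 1) (hr0 : 0 < r) (hr1 : r ≠ 1) :
    (1 - r) * ∑ i, p i ^ r ≤ (1 - r) * (#{i | p i ≠ 0} : ℝ) ^ (1 - r) := by
  have hS : ∑ i with p i ≠ 0, p i = 1 := (sum_filter_ne_zero _).trans hp1
  have := (Real.strictConcaveOn_one_sub_mul_rpow hr0 hr1).concaveOn.sum_le_card_mul_map_inv_card
    (fun i _ => hp0 i) hS
  rwa [← mul_sum, ← sum_rpow_eq_sum_filter_ne_zero hr0.ne', mul_left_comm,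
    Real.mul_inv_rpow_eq_rpow_one_sub (card_pos_of_sum_eq_one hS)] at this

lemma sum_rpow_eq_card_rpow_iff (hp0 : 0 ≤ p) (hp1 : ∑ i, p i = 1) (hr0 : 0 < r) (hr1 : r ≠ 1) :
    ∑ i, p i ^ r = (#{i | p i ≠ 0} : ℝ) ^ (1 - r) ↔
      ∀ i, p i = 0 ∨ p i = 1 / (#{i | p i ≠ 0} : ℝ) := by
  have hS : ∑ i with p i ≠ 0, p i = 1 := (sum_filter_ne_zero _).trans hp1
  have := (Real.strictConcaveOn_one_sub_mul_rpow hr0 hr1).sum_eq_card_mul_map_inv_card_iff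
    (fun i _ => hp0 i) hS
  rw [← mul_sum, ← sum_rpow_eq_sum_filter_ne_zero hr0.ne', mul_left_comm,
    Real.mul_inv_rpow_eq_rpow_one_sub (card_pos_of_sum_eq_one hS),
    mul_right_inj' (sub_ne_zero.2 hr1.symm)] at this
  rw [this, one_div]
  simp only [mem_filter, Finset.mem_univ, true_and]
  exact forall_congr' fun i => by tauto

end PowerSum

lemma strictMonoOn_rpow_sub_one_div {s : ℝ} (hs : s ≠ 0) :
    StrictMonoOn (fun x : ℝ => (x ^ s - 1) / s) (Ioi 0) := by
  intro x hx y hy hxy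
  rcases hs.lt_or_gt with hs | hs
  · have := Real.strictAntiOn_rpow_Ioi_of_exponent_neg hs hx hy hxy
    simp only [div_lt_div_right_of_neg hs]
    linarith
  · have := Real.strictMonoOn_rpow_Ici_of_exponent_pos hs (mem_Ici.2 hx.le) (mem_Ici.2 hy.le) hxy
    simp only [div_lt_div_iff_of_pos_right hs]
    linarith

lemma inv_mul_le_inv_mul_of_monotoneOn {f : ℝ → ℝ} {D : Set ℝ} (hf : MonotoneOn f D)
    {c x y : ℝ} (hx : x ∈ D) (hy : y ∈ D) (h : c * x ≤ c * y) : c⁻¹ * f x ≤ c⁻¹ * f y := by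
  rcases lt_trichotomy c 0 with hc | rfl | hc
  · exact mul_le_mul_of_nonpos_left (hf hy hx ((mul_le_mul_left_of_neg hc).1 h))
      (inv_nonpos.2 hc.le)
  · simp
  · exact mul_le_mul_of_nonneg_left (hf hx hy (le_of_mul_le_mul_left h hc)) (inv_nonneg.2 hc.le)

lemma Matrix.IsHermitian.sum_eigenvalues_eq_one {𝕜 n : Type*} [RCLike 𝕜] [Fintype n]
    [DecidableEq n] {A : Matrix n n 𝕜} (hA : A.IsHermitian) (h : A.trace = 1) :
    ∑ i, hA.eigenvalues i = 1 := by
  have := hA.trace_eq_sum_eigenvalues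
  rw [h] at this
  exact_mod_cast this.symm

lemma Matrix.IsHermitian.rank_eq_card_eigenvalues_ne_zero {𝕜 n : Type*} [RCLike 𝕜] [Fintype n]
    [DecidableEq n] {A : Matrix n n 𝕜} (hA : A.IsHermitian) :
    A.rank = #{i | hA.eigenvalues i ≠ 0} := by
  rw [hA.rank_eq_card_non_zero_eigs, Fintype.card_subtype]

theorem HY_rank_bound {d : ℕ} {Q : Matrix (Fin d) (Fin d) ℂ}
    (hQ : Q.PosSemidef) (hTr : Q.trace = 1)
    (r s : ℝ) (hr : r ∈ Set.Ioo (0:ℝ) 1 ∪ Set.Ioi 1) (hs : s ≠ 0) :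
    HY hQ.1 r s ≤ (1 / ((1 - r) * s)) * ((Q.rank : ℝ) ^ ((1 - r) * s) - 1) ∧
    (HY hQ.1 r s = (1 / ((1 - r) * s)) * ((Q.rank : ℝ) ^ ((1 - r) * s) - 1) ↔
      ∀ i, hQ.1.eigenvalues i = 0 ∨ hQ.1.eigenvalues i = 1 / (Q.rank : ℝ)) := by
  have hr0 : 0 < r := by rcases hr with h | h <;> [exact h.1; exact one_pos.trans h]
  have hr1 : r ≠ 1 := by rcases hr with h | h <;> [exact h.2.ne; exact h.ne']
  set p := hQ.1.eigenvalues
  have hp0 : 0 ≤ p := hQ.eigenvalues_nonneg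
  have hp1 : ∑ i, p i = 1 := hQ.1.sum_eigenvalues_eq_one hTr
  have hT : 0 < ∑ i, p i ^ r := sum_rpow_pos hp0 hp1
  have hU : 0 < (#{i | p i ≠ 0} : ℝ) ^ (1 - r) :=
    Real.rpow_pos_of_pos (card_pos_of_sum_eq_one ((sum_filter_ne_zero _).trans hp1)) _
  have hψ := strictMonoOn_rpow_sub_one_div hs
  have hform (x : ℝ) : 1 / ((1 - r) * s) * (x ^ s - 1) = (1 - r)⁻¹ * ((x ^ s - 1) / s) := by
    rw [one_div, mul_inv]; ring
  rw [HY, hQ.1.rank_eq_card_eigenvalues_ne_zero, Real.rpow_mul (Nat.cast_nonneg _), hform, hform,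
    (mul_right_injective₀ (inv_ne_zero (sub_ne_zero.2 hr1.symm))).eq_iff, hψ.injOn.eq_iff hT hU]
  exact ⟨inv_mul_le_inv_mul_of_monotoneOn hψ.monotoneOn hT hU
    (one_sub_mul_sum_rpow_le hp0 hp1 hr0 hr1), sum_rpow_eq_card_rpow_iff hp0 hp1 hr0 hr1⟩
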